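/- VCG pivot transfers make truthful reporting optimal: for each player i with type θᵢ, suppose the mechanism chooses the allocation a*(m) maximizing total reported welfare W(a, m) = Σⱼ vⱼ(a, mⱼ), and pays player i the transfer Tᵢ(m) = Σ_{j≠i} vⱼ(a*(m), mⱼ) − hᵢ(m₋ᵢ) for some function hᵢ of others' reports. Then for every profile of others' reports m₋ᵢ and every misreport mᵢ', player i's utility vᵢ(a*(θᵢ, m₋ᵢ), θᵢ) + Tᵢ(θᵢ, m₋ᵢ) ≥ vᵢ(a*(mᵢ', m₋ᵢ), θᵢ) + Tᵢ(mᵢ', m₋ᵢ). -/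

import Mathlib

/-!
Under a Groves transfer, player `i`'s utility from any report equals the total welfare, evaluated
at `i`'s true type, of the allocation that report induces, minus a term `hᵢ` that `i` cannot
influence. Truthful reporting makes the mechanism maximise exactly that welfare.
-/

open Finset Function

section

variable {ι : Type*} [DecidableEq ι] {Θ : ι → Type*} {M : Type*} [AddCommMonoid M]

theorem sum_erase_update (f : ∀ j, Θ j → M) (s : Finset ι) (m : ∀ j, Θ j) (i : ι) (x : Θ i) :
    ∑ j ∈ s.erase i, f j (update m i x j) = ∑ j ∈ s.erase i, f j (m j) :=
  sum_congr rfl fun _ hj => by rw [update_of_ne (ne_of_mem_erase hj)]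

variable [Fintype ι]

theorem add_sum_erase_update (f : ∀ j, Θ j → M) (m : ∀ j, Θ j) (i : ι) (x θ : Θ i) :
    f i θ + ∑ j ∈ univ.erase i, f j (update m i x j) = ∑ j, f j (update m i θ j) := by
  rw [← add_sum_erase _ _ (mem_univ i), update_self, sum_erase_update, sum_erase_update]

theorem groves_utility_eq {A : Type*} (v : ∀ i, A → Θ i → ℝ) (astar : (∀ j, Θ j) → A) (i : ι)
    (h : (∀ j, Θ j) → ℝ) (hh : ∀ m m' : ∀ j, Θ j, (∀ j, j ≠ i → m j = m' j) → h m = h m')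
    (t : (∀ j, Θ j) → ℝ) (ht : ∀ m, t m = (∑ j ∈ univ.erase i, v j (astar m) (m j)) - h m)
    (θ x : Θ i) (m : ∀ j, Θ j) :
    v i (astar (update m i x)) θ + t (update m i x) =
      (∑ j, v j (astar (update m i x)) (update m i θ j)) - h m := by
  have h_indep : h (update m i x) = h m := hh _ _ fun j hj => update_of_ne hj x m
  rw [ht, h_indep, ← add_sub_assoc, add_sum_erase_update (fun j => v j _)]

end

/-- VCG pivot transfers make truthful reporting ex post optimal. -/
theorem vcg_truthful
    {ι : Type*} [Fintype ι] [DecidableEq ι]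
    {A : Type*} {Θ : ι → Type*}
    (v : ∀ i, A → Θ i → ℝ)
    (astar : (∀ i, Θ i) → A)
    (hastar : ∀ (m : ∀ i, Θ i) (a : A),
      ∑ j, v j a (m j) ≤ ∑ j, v j (astar m) (m j))
    (h : ∀ i, (∀ j, Θ j) → ℝ)
    (hh : ∀ i (m m' : ∀ j, Θ j), (∀ j, j ≠ i → m j = m' j) → h i m = h i m')
    (T : ∀ _ : ι, (∀ j, Θ j) → ℝ)
    (hT : ∀ i (m : ∀ j, Θ j),
      T i m = (∑ j ∈ univ.erase i, v j (astar m) (m j)) - h i m)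
    (i : ι) (θi : Θ i) (mi' : Θ i) (m : ∀ j, Θ j) :
    v i (astar (Function.update m i mi')) θi + T i (Function.update m i mi') ≤
      v i (astar (Function.update m i θi)) θi + T i (Function.update m i θi) := by
  rw [groves_utility_eq v astar i (h i) (hh i) (T i) (hT i),
    groves_utility_eq v astar i (h i) (hh i) (T i) (hT i)]
  exact sub_le_sub_right (hastar _ _) _
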